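/- (Proposition 3) For the compiled model M^λ built from M^R and M^H, set the costs of all robot and human-copy actions to 1, the costs of both flip actions to 0, the cost of each check disagreement action to P2 = 0, and the cost of each check agreement action to P1 > 2^{|F^R|+|F^H|}. If π^λ is a cost-optimal plan of M^λ under these costs, then the number of check disagreement actions in π^λ equals the maximal goal state divergence: |κ⁻(π^λ)| = GD↑(M^R, M^H). -/

import Mathlib

/-- A STRIPS-style action over fluent type `F`: positive/negative preconditions
and add/delete effects. -/
structure Act (F : Type) where
  prePos : Finset F
  preNeg : Finset F
  addE : Finset F
  delE : Finset F
deriving DecidableEq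

/-- A planning model `M = ⟨F, A, c, I, G⟩`. -/
structure PModel (F : Type) [DecidableEq F] where
  fluents : Finset F
  actions : Finset (Act F)
  cost : Act F → ℕ
  init : Finset F
  goal : Finset F

variable {F : Type} [DecidableEq F]

/-- Action `a` is executable in state `s`. -/
def execAct (s : Finset F) (a : Act F) : Prop :=
  a.prePos ⊆ s ∧ a.preNeg ∩ s = ∅

/-- Transition of one action. -/
def stepAct (s : Finset F) (a : Act F) : Finset F :=
  (s ∪ a.addE) \ a.delE

/-- Transition extended to action sequences. -/
def runSeq (s : Finset F) : List (Act F) → Finset F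
  | [] => s
  | a :: π => runSeq (stepAct s a) π

/-- The action sequence is executable in order from state `s`, using actions of `M`. -/
def ExecFrom (M : PModel F) : Finset F → List (Act F) → Prop
  | _, [] => True
  | s, a :: π => a ∈ M.actions ∧ execAct s a ∧ ExecFrom M (stepAct s a) π

/-- A plan for `M`: executable from the initial state and achieving the goal. -/
def IsPlan (M : PModel F) (π : List (Act F)) : Prop :=
  ExecFrom M M.init π ∧ M.goal ⊆ runSeq M.init π

/-- Cost of a plan. -/
def planCost (M : PModel F) (π : List (Act F)) : ℕ :=
  (π.map M.cost).sum

/-- Cost-optimal plan. -/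
def IsOptimal (M : PModel F) (π : List (Act F)) : Prop :=
  IsPlan M π ∧ ∀ π', IsPlan M π' → planCost M π ≤ planCost M π'

/-- Goal state divergence of plans `π1` of `M1` and `π2` of `M2`:
the symmetric difference of the two final states. -/
def GSD (M1 M2 : PModel F) (π1 π2 : List (Act F)) : Finset F :=
  (runSeq M1.init π1 \ runSeq M2.init π2) ∪ (runSeq M2.init π2 \ runSeq M1.init π1)

/-- All achievable values `|GSD(π1, M1, π2, M2)|` over pairs of valid plans. -/
def gsdVals (M1 M2 : PModel F) : Set ℕ :=
  { n | ∃ π1 π2, IsPlan M1 π1 ∧ IsPlan M2 π2 ∧ n = (GSD M1 M2 π1 π2).card }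

/-- Maximal (worst-case) goal state divergence `GD↑(M1, M2)`. -/
noncomputable def GDup (M1 M2 : PModel F) : ℕ := sSup (gsdVals M1 M2)

/-- Minimal (best-case) goal state divergence `GD↓(M1, M2)`. -/
noncomputable def GDdown (M1 M2 : PModel F) : ℕ := sInf (gsdVals M1 M2)

/-- Fluents of the compiled model `M^λ`: the robot copy `F^R`, the disjoint human copy
`F^H`, the housekeeping fluents `robot_can_act`/`human_can_act`, and one compare fluent
`f^κ` per original fluent. -/
inductive LF (F : Type) where
  | robot : F → LF F
  | human : F → LF F
  | robotCanAct : LF F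
  | humanCanAct : LF F
  | compare : F → LF F
deriving DecidableEq

variable {F : Type} [DecidableEq F] in
/-- A robot action of `M^R` lifted into the compiled model: expressed in the robot copy of
the fluents, with `robot_can_act` added as a positive precondition. -/
def liftR (a : Act F) : Act (LF F) where
  prePos := a.prePos.image LF.robot ∪ {LF.robotCanAct}
  preNeg := a.preNeg.image LF.robot
  addE := a.addE.image LF.robot
  delE := a.delE.image LF.robot

variable {F : Type} [DecidableEq F] in
/-- A human action of `M^H` lifted into the compiled model: expressed in the human copy of
the fluents, with `human_can_act` added as a positive precondition. -/
def liftH (a : Act F) : Act (LF F) where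
  prePos := a.prePos.image LF.human ∪ {LF.humanCanAct}
  preNeg := a.preNeg.image LF.human
  addE := a.addE.image LF.human
  delE := a.delE.image LF.human

variable {F : Type} [DecidableEq F] in
/-- The human flip action: requires the human copy of the goal and `human_can_act`;
deletes `human_can_act` and adds `robot_can_act`. -/
def flipH (MH : PModel F) : Act (LF F) where
  prePos := MH.goal.image LF.human ∪ {LF.humanCanAct}
  preNeg := ∅
  addE := {LF.robotCanAct}
  delE := {LF.humanCanAct}

variable {F : Type} [DecidableEq F] in
/-- The robot flip action: requires the robot goal and `robot_can_act`;
deletes `robot_can_act`. -/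
def flipR (MR : PModel F) : Act (LF F) where
  prePos := MR.goal.image LF.robot ∪ {LF.robotCanAct}
  preNeg := ∅
  addE := ∅
  delE := {LF.robotCanAct}

variable {F : Type} [DecidableEq F] in
/-- Check disagreement action `a^1_{f}`: fires when `f` holds for the robot but not in the
human copy; adds the compare fluent `f^κ`. -/
def chk1 (f : F) : Act (LF F) where
  prePos := {LF.robot f}
  preNeg := {LF.human f, LF.robotCanAct, LF.humanCanAct, LF.compare f}
  addE := {LF.compare f}
  delE := ∅

variable {F : Type} [DecidableEq F] in
/-- Check disagreement action `a^2_{f}`: fires when `f` holds in the human copy but not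
for the robot; adds the compare fluent `f^κ`. -/
def chk2 (f : F) : Act (LF F) where
  prePos := {LF.human f}
  preNeg := {LF.robot f, LF.robotCanAct, LF.humanCanAct, LF.compare f}
  addE := {LF.compare f}
  delE := ∅

variable {F : Type} [DecidableEq F] in
/-- Check agreement action `a^3_{f}`: fires when `f` holds in both copies; adds `f^κ`. -/
def chk3 (f : F) : Act (LF F) where
  prePos := {LF.robot f, LF.human f}
  preNeg := {LF.robotCanAct, LF.humanCanAct, LF.compare f}
  addE := {LF.compare f}
  delE := ∅

variable {F : Type} [DecidableEq F] in
/-- Check agreement action `a^4_{f}`: fires when `f` holds in neither copy; adds `f^κ`. -/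
def chk4 (f : F) : Act (LF F) where
  prePos := ∅
  preNeg := {LF.robot f, LF.human f, LF.robotCanAct, LF.humanCanAct, LF.compare f}
  addE := {LF.compare f}
  delE := ∅

variable {F : Type} [DecidableEq F] in
/-- The compiled model `M^λ` for the pair `⟨M^R, M^H⟩` (sharing fluent set `F = F^R`),
with cost function `c`: lifted robot and human actions, the two flip actions, and the four
check actions per fluent; initial state `I^R ∪ I^H ∪ {human_can_act}`; goal
`G^R ∪ G^H ∪ F^κ`. -/
def compiled (MR MH : PModel F) (c : Act (LF F) → ℕ) : PModel (LF F) where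
  fluents := MR.fluents.image LF.robot ∪ MR.fluents.image LF.human ∪
    {LF.robotCanAct, LF.humanCanAct} ∪ MR.fluents.image LF.compare
  actions := MR.actions.image liftR ∪ MH.actions.image liftH ∪
    {flipH MH, flipR MR} ∪ MR.fluents.image chk1 ∪ MR.fluents.image chk2 ∪
    MR.fluents.image chk3 ∪ MR.fluents.image chk4
  cost := c
  init := MR.init.image LF.robot ∪ MH.init.image LF.human ∪ {LF.humanCanAct}
  goal := MR.goal.image LF.robot ∪ MH.goal.image LF.human ∪ MR.fluents.image LF.compare

variable {F : Type} [DecidableEq F] in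
/-- `H(π^λ)`: the subsequence of human-copy actions appearing in `π^λ`. -/
def humanPart (MH : PModel F) (π : List (Act (LF F))) : List (Act (LF F)) :=
  π.filter (fun a => decide (a ∈ MH.actions.image liftH))

variable {F : Type} [DecidableEq F] in
/-- `R(π^λ)`: the subsequence of robot actions appearing in `π^λ`. -/
def robotPart (MR : PModel F) (π : List (Act (LF F))) : List (Act (LF F)) :=
  π.filter (fun a => decide (a ∈ MR.actions.image liftR))

variable {F : Type} [DecidableEq F] in
/-- `|κ⁻(π^λ)|`: the number of check disagreement actions occurring in `π^λ`. -/
def disCount (MR : PModel F) (π : List (Act (LF F))) : ℕ :=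
  π.countP (fun a => decide (∃ f ∈ MR.fluents, a = chk1 f ∨ a = chk2 f))

variable {F : Type} [DecidableEq F] in
/-- `|κ⁺(π^λ)|`: the number of check agreement actions occurring in `π^λ`. -/
def agrCount (MR : PModel F) (π : List (Act (LF F))) : ℕ :=
  π.countP (fun a => decide (∃ f ∈ MR.fluents, a = chk3 f ∨ a = chk4 f))

variable {F : Type} [DecidableEq F] in
/-- A well-formed planning model: initial state, goal, and all action components are
contained in the fluent set. -/
def WellFormed (M : PModel F) : Prop :=
  M.init ⊆ M.fluents ∧ M.goal ⊆ M.fluents ∧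
  ∀ a ∈ M.actions,
    a.prePos ⊆ M.fluents ∧ a.preNeg ⊆ M.fluents ∧
    a.addE ⊆ M.fluents ∧ a.delE ⊆ M.fluents

/-!
Every plan of `M^λ` runs a plan of `M^H`, flips, runs a plan of `M^R`, flips, and then checks
every fluent exactly once; its disagreement checks are the fluents of the goal state divergence
`S` of those two plans, and each of the other `|F| - |S|` checks costs `P1`. Conversely, any two
plans compose into a plan of `M^λ` costing their total length plus `P1 (|F| - |S|)`, and cutting
loops shortens every plan to fewer than `2^{|F|}` actions without changing its final state.
Since `P1` exceeds the total length of two such short plans, a single agreement check more than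
necessary costs more than an optimal plan may, so an optimal plan maximises `|S|`.
-/

open scoped symmDiff

def IsPlanFrom (M : PModel F) (s : Finset F) (π : List (Act F)) : Prop :=
  ExecFrom M s π ∧ M.goal ⊆ runSeq s π

section Planning

variable {M : PModel F}

lemma execAct_iff {s : Finset F} {a : Act F} :
    execAct s a ↔ (∀ x ∈ a.prePos, x ∈ s) ∧ ∀ x ∈ a.preNeg, x ∉ s := by
  simp [execAct, Finset.subset_iff, Finset.eq_empty_iff_forall_notMem]

lemma runSeq_append (s : Finset F) (l₁ l₂ : List (Act F)) :
    runSeq s (l₁ ++ l₂) = runSeq (runSeq s l₁) l₂ := by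
  induction l₁ generalizing s with
  | nil => rfl
  | cons a l ih => exact ih _

lemma execFrom_append {s : Finset F} {l₁ l₂ : List (Act F)} :
    ExecFrom M s (l₁ ++ l₂) ↔ ExecFrom M s l₁ ∧ ExecFrom M (runSeq s l₁) l₂ := by
  induction l₁ generalizing s with
  | nil => simp [ExecFrom, runSeq]
  | cons a l ih => simp [ExecFrom, runSeq, ih, and_assoc]

lemma ExecFrom.mem_actions {s : Finset F} {l : List (Act F)} (hl : ExecFrom M s l) :
    ∀ a ∈ l, a ∈ M.actions := by
  induction l generalizing s with
  | nil => simp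
  | cons b l ih =>
    obtain ⟨hb, -, hl⟩ := hl
    simpa [hb] using ih hl

lemma ExecFrom.runSeq_subset (hM : WellFormed M) {s : Finset F} {l : List (Act F)}
    (hl : ExecFrom M s l) (hs : s ⊆ M.fluents) : runSeq s l ⊆ M.fluents := by
  induction l generalizing s with
  | nil => exact hs
  | cons a l ih =>
    obtain ⟨ha, -, hl⟩ := hl
    exact ih hl (Finset.sdiff_subset.trans (Finset.union_subset hs (hM.2.2 a ha).2.2.1))

def trace (s : Finset F) : List (Act F) → List (Finset F)
  | [] => [s]
  | a :: l => s :: trace (stepAct s a) l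

lemma length_trace (s : Finset F) (l : List (Act F)) : (trace s l).length = l.length + 1 := by
  induction l generalizing s with
  | nil => rfl
  | cons a l ih => simp [trace, ih]

lemma exists_append_of_mem_trace {s t : Finset F} {l : List (Act F)} (ht : t ∈ trace s l) :
    ∃ l₁ l₂, l = l₁ ++ l₂ ∧ t = runSeq s l₁ := by
  induction l generalizing s with
  | nil => exact ⟨[], [], rfl, List.mem_singleton.1 ht⟩
  | cons a l ih =>
    rcases List.mem_cons.1 ht with rfl | ht
    · exact ⟨[], a :: l, rfl, rfl⟩
    · obtain ⟨l₁, l₂, rfl, rfl⟩ := ih ht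
      exact ⟨a :: l₁, l₂, rfl, rfl⟩

lemma exists_loop_of_duplicate_trace {s t : Finset F} {l : List (Act F)}
    (ht : List.Duplicate t (trace s l)) :
    ∃ l₁ l₂ l₃, l = l₁ ++ l₂ ++ l₃ ∧ l₂ ≠ [] ∧ runSeq s (l₁ ++ l₂) = runSeq s l₁ := by
  induction l generalizing s with
  | nil => exact absurd ht (List.not_duplicate_singleton t s)
  | cons a l ih =>
    rcases List.duplicate_cons_iff.1 ht with ⟨rfl, hmem⟩ | hdup
    · obtain ⟨l₁, l₂, rfl, hrun⟩ := exists_append_of_mem_trace hmem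
      exact ⟨[], a :: l₁, l₂, rfl, List.cons_ne_nil _ _, hrun.symm⟩
    · obtain ⟨l₁, l₂, l₃, rfl, hne, hrun⟩ := ih hdup
      exact ⟨a :: l₁, l₂, l₃, rfl, hne, hrun⟩

lemma ExecFrom.trace_subset (hM : WellFormed M) {s : Finset F} {l : List (Act F)}
    (hl : ExecFrom M s l) (hs : s ⊆ M.fluents) : ∀ t ∈ trace s l, t ⊆ M.fluents := by
  intro t ht
  obtain ⟨l₁, l₂, rfl, rfl⟩ := exists_append_of_mem_trace ht
  exact (execFrom_append.1 hl).1.runSeq_subset hM hs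

/-- Pigeonhole on the visited states: a long execution revisits a state, and the loop between
the two visits can be cut out. -/
lemma exists_shorter_execFrom (hM : WellFormed M) {s : Finset F} (hs : s ⊆ M.fluents)
    {l : List (Act F)} (hl : ExecFrom M s l) (hlen : 2 ^ M.fluents.card ≤ l.length) :
    ∃ l', ExecFrom M s l' ∧ runSeq s l' = runSeq s l ∧ l'.length < l.length := by
  have hdup : ¬ (trace s l).Nodup := fun hnd => by
    have := Finset.card_le_card (s := (trace s l).toFinset) (t := M.fluents.powerset)
      fun t ht => Finset.mem_powerset.2 (hl.trace_subset hM hs t (List.mem_toFinset.1 ht))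
    rw [List.toFinset_card_of_nodup hnd, length_trace, Finset.card_powerset] at this
    omega
  obtain ⟨t, ht⟩ := List.exists_duplicate_iff_not_nodup.2 hdup
  obtain ⟨l₁, l₂, l₃, rfl, hne, hloop⟩ := exists_loop_of_duplicate_trace ht
  obtain ⟨hl₁₂, hl₃⟩ := execFrom_append.1 hl
  rw [hloop] at hl₃
  refine ⟨l₁ ++ l₃, execFrom_append.2 ⟨(execFrom_append.1 hl₁₂).1, hl₃⟩, ?_, ?_⟩
  · rw [runSeq_append, runSeq_append s (l₁ ++ l₂), hloop]
  · simpa using List.length_pos_iff.2 hne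

theorem exists_short_execFrom (hM : WellFormed M) {s : Finset F} (hs : s ⊆ M.fluents)
    (l : List (Act F)) (hl : ExecFrom M s l) :
    ∃ l', ExecFrom M s l' ∧ runSeq s l' = runSeq s l ∧ l'.length < 2 ^ M.fluents.card := by
  by_cases hlen : l.length < 2 ^ M.fluents.card
  · exact ⟨l, hl, rfl, hlen⟩
  obtain ⟨l', hl', hrun, hshorter⟩ := exists_shorter_execFrom hM hs hl (not_lt.1 hlen)
  obtain ⟨l'', hl'', hrun', hlen''⟩ := exists_short_execFrom hM hs l' hl'
  exact ⟨l'', hl'', hrun'.trans hrun, hlen''⟩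
termination_by l.length

lemma IsPlan.exists_short (hM : WellFormed M) {π : List (Act F)} (hπ : IsPlan M π) :
    ∃ π', IsPlan M π' ∧ runSeq M.init π' = runSeq M.init π ∧
      π'.length < 2 ^ M.fluents.card := by
  obtain ⟨π', hπ', hrun, hlen⟩ := exists_short_execFrom hM hM.1 π hπ.1
  exact ⟨π', ⟨hπ', hrun ▸ hπ.2⟩, hrun, hlen⟩

end Planning

section Simulation

variable {F' : Type} [DecidableEq F'] {M : PModel F} {M' : PModel F'}
  {φ : Finset F → Finset F'} {L : Act F → Act F'}

lemma runSeq_map (hstep : ∀ s a, stepAct (φ s) (L a) = φ (stepAct s a)) (s : Finset F)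
    (l : List (Act F)) : runSeq (φ s) (l.map L) = φ (runSeq s l) := by
  induction l generalizing s with
  | nil => rfl
  | cons a l ih => rw [List.map_cons, runSeq, hstep, ih, runSeq]

lemma ExecFrom.map (hmem : ∀ a ∈ M.actions, L a ∈ M'.actions)
    (hexec : ∀ s a, execAct s a → execAct (φ s) (L a))
    (hstep : ∀ s a, stepAct (φ s) (L a) = φ (stepAct s a)) {s : Finset F}
    {l : List (Act F)} (hl : ExecFrom M s l) : ExecFrom M' (φ s) (l.map L) := by
  induction l generalizing s with
  | nil => trivial
  | cons a l ih =>
    obtain ⟨ha, hx, hl⟩ := hl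
    exact ⟨hmem a ha, hexec s a hx, hstep s a ▸ ih hl⟩

end Simulation

section Divergence

variable {M₁ M₂ : PModel F}

lemma GSD_eq_symmDiff (π₁ π₂ : List (Act F)) :
    GSD M₁ M₂ π₁ π₂ = runSeq M₁.init π₁ ∆ runSeq M₂.init π₂ := rfl

lemma GSD_subset_union (h₁ : WellFormed M₁) (h₂ : WellFormed M₂) {π₁ π₂ : List (Act F)}
    (hπ₁ : IsPlan M₁ π₁) (hπ₂ : IsPlan M₂ π₂) : GSD M₁ M₂ π₁ π₂ ⊆ M₁.fluents ∪ M₂.fluents :=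
  Finset.symmDiff_subset_union.trans <| Finset.union_subset_union
    (hπ₁.1.runSeq_subset h₁ h₁.1) (hπ₂.1.runSeq_subset h₂ h₂.1)

lemma bddAbove_gsdVals (h₁ : WellFormed M₁) (h₂ : WellFormed M₂) :
    BddAbove (gsdVals M₁ M₂) := by
  refine ⟨(M₁.fluents ∪ M₂.fluents).card, ?_⟩
  rintro n ⟨π₁, π₂, hπ₁, hπ₂, rfl⟩
  exact Finset.card_le_card (GSD_subset_union h₁ h₂ hπ₁ hπ₂)

lemma card_GSD_le_GDup (h₁ : WellFormed M₁) (h₂ : WellFormed M₂) {π₁ π₂ : List (Act F)}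
    (hπ₁ : IsPlan M₁ π₁) (hπ₂ : IsPlan M₂ π₂) : (GSD M₁ M₂ π₁ π₂).card ≤ GDup M₁ M₂ :=
  le_csSup (bddAbove_gsdVals h₁ h₂) ⟨π₁, π₂, hπ₁, hπ₂, rfl⟩

lemma exists_short_plans_card_GSD_eq_GDup (h₁ : WellFormed M₁) (h₂ : WellFormed M₂)
    {π₁ π₂ : List (Act F)} (hπ₁ : IsPlan M₁ π₁) (hπ₂ : IsPlan M₂ π₂) :
    ∃ σ₁ σ₂, IsPlan M₁ σ₁ ∧ IsPlan M₂ σ₂ ∧ (GSD M₁ M₂ σ₁ σ₂).card = GDup M₁ M₂ ∧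
      σ₁.length < 2 ^ M₁.fluents.card ∧ σ₂.length < 2 ^ M₂.fluents.card := by
  obtain ⟨τ₁, τ₂, hτ₁, hτ₂, hmax⟩ := Nat.sSup_mem (s := gsdVals M₁ M₂)
    ⟨_, π₁, π₂, hπ₁, hπ₂, rfl⟩ (bddAbove_gsdVals h₁ h₂)
  obtain ⟨σ₁, hσ₁, hrun₁, hlen₁⟩ := hτ₁.exists_short h₁
  obtain ⟨σ₂, hσ₂, hrun₂, hlen₂⟩ := hτ₂.exists_short h₂
  refine ⟨σ₁, σ₂, hσ₁, hσ₂, ?_, hlen₁, hlen₂⟩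
  rw [GSD_eq_symmDiff, hrun₁, hrun₂]
  exact hmax.symm

end Divergence

lemma sum_map_eq_length {α : Type*} {g : α → ℕ} {l : List α} (h : ∀ a ∈ l, g a = 1) :
    (l.map g).sum = l.length := by
  rw [List.map_congr_left h]
  simp

lemma add_lt_two_pow_add {x y a b : ℕ} (hx : x < 2 ^ a) (hy : y < 2 ^ b) :
    x + y < 2 ^ (a + b) := by
  have : 1 ≤ 2 ^ a := Nat.one_le_two_pow
  have : 1 ≤ 2 ^ b := Nat.one_le_two_pow
  rw [pow_add]
  nlinarith

namespace Compilation

inductive Phase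
  | human
  | robot
  | check

variable {MR MH : PModel F} {c : Act (LF F) → ℕ} {P1 : ℕ} {p : Phase} {r h k : Finset F}

/-- Every state of `M^λ` reachable from its initial state has this form. -/
def encode (p : Phase) (r h k : Finset F) : Finset (LF F) :=
  r.image LF.robot ∪ h.image LF.human ∪ k.image LF.compare ∪
    match p with
    | .human => {LF.humanCanAct}
    | .robot => {LF.robotCanAct}
    | .check => ∅

@[simp] lemma robot_mem_encode {f : F} : LF.robot f ∈ encode p r h k ↔ f ∈ r := by
  cases p <;> simp [encode]

@[simp] lemma human_mem_encode {f : F} : LF.human f ∈ encode p r h k ↔ f ∈ h := by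
  cases p <;> simp [encode]

@[simp] lemma compare_mem_encode {f : F} : LF.compare f ∈ encode p r h k ↔ f ∈ k := by
  cases p <;> simp [encode]

@[simp] lemma robotCanAct_mem_encode : LF.robotCanAct ∈ encode p r h k ↔ p = .robot := by
  cases p <;> simp [encode]

@[simp] lemma humanCanAct_mem_encode : LF.humanCanAct ∈ encode p r h k ↔ p = .human := by
  cases p <;> simp [encode]

lemma init_compiled : (compiled MR MH c).init = encode .human MR.init MH.init ∅ := by
  ext x
  cases x <;> simp [compiled]

lemma goal_compiled_subset_iff :
    (compiled MR MH c).goal ⊆ encode p r h k ↔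
      MR.goal ⊆ r ∧ MH.goal ⊆ h ∧ MR.fluents ⊆ k := by
  simp only [compiled, Finset.union_subset_iff, Finset.image_subset_iff, robot_mem_encode,
    human_mem_encode, compare_mem_encode, and_assoc]
  rfl

lemma mem_actions_compiled {a : Act (LF F)} :
    a ∈ (compiled MR MH c).actions ↔
      (∃ b ∈ MR.actions, liftR b = a) ∨ (∃ b ∈ MH.actions, liftH b = a) ∨
      a = flipH MH ∨ a = flipR MR ∨
      ∃ g ∈ MR.fluents, chk1 g = a ∨ chk2 g = a ∨ chk3 g = a ∨ chk4 g = a := by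
  simp only [compiled, Finset.mem_union, Finset.mem_image, Finset.mem_insert,
    Finset.mem_singleton]
  aesop

@[simp] lemma execAct_liftH_encode {b : Act F} :
    execAct (encode p r h k) (liftH b) ↔ p = .human ∧ execAct h b := by
  cases p <;> simp [execAct_iff, liftH]

@[simp] lemma execAct_liftR_encode {b : Act F} :
    execAct (encode p r h k) (liftR b) ↔ p = .robot ∧ execAct r b := by
  cases p <;> simp [execAct_iff, liftR]

@[simp] lemma execAct_flipH_encode :
    execAct (encode p r h k) (flipH MH) ↔ p = .human ∧ MH.goal ⊆ h := by
  cases p <;> simp [execAct_iff, flipH, Finset.subset_iff]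

@[simp] lemma execAct_flipR_encode :
    execAct (encode p r h k) (flipR MR) ↔ p = .robot ∧ MR.goal ⊆ r := by
  cases p <;> simp [execAct_iff, flipR, Finset.subset_iff]

@[simp] lemma execAct_chk1_encode {g : F} :
    execAct (encode p r h k) (chk1 g) ↔ p = .check ∧ g ∈ r ∧ g ∉ h ∧ g ∉ k := by
  cases p <;> simp [execAct_iff, chk1]

@[simp] lemma execAct_chk2_encode {g : F} :
    execAct (encode p r h k) (chk2 g) ↔ p = .check ∧ g ∈ h ∧ g ∉ r ∧ g ∉ k := by
  cases p <;> simp [execAct_iff, chk2]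

@[simp] lemma execAct_chk3_encode {g : F} :
    execAct (encode p r h k) (chk3 g) ↔ p = .check ∧ g ∈ r ∧ g ∈ h ∧ g ∉ k := by
  cases p <;> simp [execAct_iff, chk3, and_assoc]

@[simp] lemma execAct_chk4_encode {g : F} :
    execAct (encode p r h k) (chk4 g) ↔ p = .check ∧ g ∉ r ∧ g ∉ h ∧ g ∉ k := by
  cases p <;> simp [execAct_iff, chk4]

lemma stepAct_liftH_encode (b : Act F) :
    stepAct (encode p r h k) (liftH b) = encode p r (stepAct h b) k := by
  ext x
  cases x <;> simp [stepAct, liftH]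

lemma stepAct_liftR_encode (b : Act F) :
    stepAct (encode p r h k) (liftR b) = encode p (stepAct r b) h k := by
  ext x
  cases x <;> simp [stepAct, liftR]

lemma stepAct_flipH_encode :
    stepAct (encode .human r h k) (flipH MH) = encode .robot r h k := by
  ext x
  cases x <;> simp [stepAct, flipH]

lemma stepAct_flipR_encode :
    stepAct (encode .robot r h k) (flipR MR) = encode .check r h k := by
  ext x
  cases x <;> simp [stepAct, flipR]

lemma stepAct_encode_of_adds_compare {a : Act (LF F)} {g : F} (hadd : a.addE = {LF.compare g})
    (hdel : a.delE = ∅) : stepAct (encode p r h k) a = encode p r h (insert g k) := by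
  ext x
  cases x <;> simp [stepAct, hadd, hdel]

lemma disCount_cons (a : Act (LF F)) (l : List (Act (LF F))) :
    disCount MR (a :: l) = disCount MR [a] + disCount MR l := by
  simp only [disCount, ← List.countP_append, List.singleton_append]

lemma agrCount_cons (a : Act (LF F)) (l : List (Act (LF F))) :
    agrCount MR (a :: l) = agrCount MR [a] + agrCount MR l := by
  simp only [agrCount, ← List.countP_append, List.singleton_append]

lemma counts_of_robotCanAct_notMem {a : Act (LF F)} (ha : LF.robotCanAct ∉ a.preNeg) :
    disCount MR [a] = 0 ∧ agrCount MR [a] = 0 := by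
  have hne (f : F) : a ≠ chk1 f ∧ a ≠ chk2 f ∧ a ≠ chk3 f ∧ a ≠ chk4 f := by
    refine ⟨?_, ?_, ?_, ?_⟩ <;> rintro rfl <;> simp [chk1, chk2, chk3, chk4] at ha
  simp [disCount, agrCount, hne]

lemma disagreement_ne_agreement (f g : F) :
    chk1 g ≠ chk3 f ∧ chk1 g ≠ chk4 f ∧ chk2 g ≠ chk3 f ∧ chk2 g ≠ chk4 f := by
  refine ⟨fun h => ?_, fun h => ?_, fun h => ?_, fun h => ?_⟩ <;>
    simpa [chk1, chk2, chk3, chk4] using congrArg (fun a => a.prePos.card) h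

lemma counts_of_disagreement {a : Act (LF F)} {g : F} (hg : g ∈ MR.fluents)
    (ha : a = chk1 g ∨ a = chk2 g) : disCount MR [a] = 1 ∧ agrCount MR [a] = 0 := by
  simp only [disCount, agrCount, List.countP_singleton, decide_eq_true_eq]
  refine ⟨if_pos ⟨g, hg, ha⟩, if_neg ?_⟩
  have := disagreement_ne_agreement (F := F)
  rintro ⟨f, -, h | h⟩ <;> rcases ha with rfl | rfl <;> grind

lemma counts_of_agreement {a : Act (LF F)} {g : F} (hg : g ∈ MR.fluents)
    (ha : a = chk3 g ∨ a = chk4 g) : disCount MR [a] = 0 ∧ agrCount MR [a] = 1 := by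
  simp only [disCount, agrCount, List.countP_singleton, decide_eq_true_eq]
  refine ⟨if_neg ?_, if_pos ⟨g, hg, ha⟩⟩
  have := disagreement_ne_agreement (F := F)
  rintro ⟨f, -, h | h⟩ <;> rcases ha with rfl | rfl <;> grind

lemma exists_fluent_of_execAct_check {a : Act (LF F)} (ha : a ∈ (compiled MR MH c).actions)
    (hx : execAct (encode .check r h k) a) :
    ∃ g ∉ k, stepAct (encode .check r h k) a = encode .check r h (insert g k) ∧
      (g ∈ r ∆ h ∧ disCount MR [a] = 1 ∧ agrCount MR [a] = 0 ∨
        g ∉ r ∆ h ∧ disCount MR [a] = 0 ∧ agrCount MR [a] = 1) := by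
  rcases mem_actions_compiled.1 ha with
    ⟨b, -, rfl⟩ | ⟨b, -, rfl⟩ | rfl | rfl | ⟨g, hg, rfl | rfl | rfl | rfl⟩ <;>
    simp at hx <;>
    refine ⟨g, hx.2.2, stepAct_encode_of_adds_compare rfl rfl, ?_⟩
  · exact .inl ⟨by simp [Finset.mem_symmDiff, hx.1, hx.2.1], counts_of_disagreement hg (.inl rfl)⟩
  · exact .inl ⟨by simp [Finset.mem_symmDiff, hx.1, hx.2.1], counts_of_disagreement hg (.inr rfl)⟩
  · exact .inr ⟨by simp [Finset.mem_symmDiff, hx.1, hx.2.1], counts_of_agreement hg (.inl rfl)⟩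
  · exact .inr ⟨by simp [Finset.mem_symmDiff, hx.1, hx.2.1], counts_of_agreement hg (.inr rfl)⟩

lemma exists_runSeq_eq_encode_check {l : List (Act (LF F))}
    (hl : ExecFrom (compiled MR MH c) (encode .check r h k) l) :
    ∃ k', runSeq (encode .check r h k) l = encode .check r h k' ∧
      disCount MR l + (k ∩ r ∆ h).card = (k' ∩ r ∆ h).card ∧
      agrCount MR l + (k \ r ∆ h).card = (k' \ r ∆ h).card := by
  induction l generalizing k with
  | nil => exact ⟨k, rfl, by simp [disCount], by simp [agrCount]⟩
  | cons a l ih =>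
    obtain ⟨ha, hx, hl⟩ := hl
    obtain ⟨g, hgk, hstep, hcounts⟩ := exists_fluent_of_execAct_check ha hx
    rw [hstep] at hl
    obtain ⟨k', hrun, hdis, hagr⟩ := ih hl
    refine ⟨k', by rw [runSeq, hstep, hrun], ?_⟩
    have hgk' : g ∉ k ∩ r ∆ h ∧ g ∉ k \ r ∆ h := by simp [hgk]
    rw [disCount_cons, agrCount_cons]
    rcases hcounts with ⟨hS, hdis₁, hagr₁⟩ | ⟨hS, hdis₁, hagr₁⟩
    · rw [Finset.insert_inter_of_mem hS, Finset.card_insert_of_notMem hgk'.1] at hdis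
      rw [Finset.insert_sdiff_of_mem _ hS] at hagr
      omega
    · rw [Finset.insert_inter_of_notMem hS] at hdis
      rw [Finset.insert_sdiff_of_notMem _ hS, Finset.card_insert_of_notMem hgk'.2] at hagr
      omega

/-- `l` checks a superset `k` of the fluents, with a disagreement check exactly at `k ∩ S`. -/
def ChecksAgainst (MR : PModel F) (l : List (Act (LF F))) (S : Finset F) : Prop :=
  ∃ k, MR.fluents ⊆ k ∧ disCount MR l = (k ∩ S).card ∧ agrCount MR l = (k \ S).card

lemma checksAgainst_nil {S : Finset F} (h : MR.fluents ⊆ ∅) : ChecksAgainst MR [] S :=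
  ⟨∅, h, by simp [disCount], by simp [agrCount]⟩

lemma ChecksAgainst.cons {l : List (Act (LF F))} {S : Finset F} (hl : ChecksAgainst MR l S)
    {a : Act (LF F)} (ha : LF.robotCanAct ∉ a.preNeg) : ChecksAgainst MR (a :: l) S := by
  obtain ⟨k, hk, hdis, hagr⟩ := hl
  obtain ⟨hdis₁, hagr₁⟩ := counts_of_robotCanAct_notMem (MR := MR) ha
  exact ⟨k, hk, by rw [disCount_cons, hdis₁, hdis, zero_add],
    by rw [agrCount_cons, hagr₁, hagr, zero_add]⟩

lemma ChecksAgainst.disCount_eq {l : List (Act (LF F))} {S : Finset F}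
    (hl : ChecksAgainst MR l S) (hS : S ⊆ MR.fluents) : disCount MR l = S.card := by
  obtain ⟨k, hk, hdis, -⟩ := hl
  rw [hdis, Finset.inter_eq_right.2 (hS.trans hk)]

lemma ChecksAgainst.card_sdiff_le_agrCount {l : List (Act (LF F))} {S : Finset F}
    (hl : ChecksAgainst MR l S) : (MR.fluents \ S).card ≤ agrCount MR l := by
  obtain ⟨k, hk, -, hagr⟩ := hl
  exact hagr ▸ Finset.card_le_card (Finset.sdiff_subset_sdiff hk le_rfl)

lemma checksAgainst_of_execFrom_check {l : List (Act (LF F))}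
    (hl : ExecFrom (compiled MR MH c) (encode .check r h ∅) l)
    (hgoal : (compiled MR MH c).goal ⊆ runSeq (encode .check r h ∅) l) :
    ChecksAgainst MR l (r ∆ h) := by
  obtain ⟨k, hrun, hdis, hagr⟩ := exists_runSeq_eq_encode_check hl
  rw [hrun, goal_compiled_subset_iff] at hgoal
  exact ⟨k, hgoal.2.2, by simpa using hdis, by simpa using hagr⟩

lemma exists_plan_of_execFrom_robot {l : List (Act (LF F))}
    (hl : ExecFrom (compiled MR MH c) (encode .robot r h ∅) l)
    (hgoal : (compiled MR MH c).goal ⊆ runSeq (encode .robot r h ∅) l) :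
    ∃ ρ, IsPlanFrom MR r ρ ∧ ChecksAgainst MR l (runSeq r ρ ∆ h) := by
  induction l generalizing r with
  | nil =>
    obtain ⟨hR, -, hF⟩ := goal_compiled_subset_iff.1 hgoal
    exact ⟨[], ⟨trivial, hR⟩, checksAgainst_nil hF⟩
  | cons a l ih =>
    obtain ⟨ha, hx, hl⟩ := hl
    rcases mem_actions_compiled.1 ha with
      ⟨b, hb, rfl⟩ | ⟨b, -, rfl⟩ | rfl | rfl | ⟨g, -, rfl | rfl | rfl | rfl⟩ <;>
      simp at hx
    · rw [runSeq, stepAct_liftR_encode] at hgoal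
      rw [stepAct_liftR_encode] at hl
      obtain ⟨ρ, hρ, hchecks⟩ := ih hl hgoal
      exact ⟨b :: ρ, ⟨⟨hb, hx, hρ.1⟩, hρ.2⟩, hchecks.cons (by simp [liftR])⟩
    · rw [runSeq, stepAct_flipR_encode] at hgoal
      rw [stepAct_flipR_encode] at hl
      exact ⟨[], ⟨trivial, hx⟩, (checksAgainst_of_execFrom_check hl hgoal).cons (by simp [flipR])⟩

lemma exists_plans_of_execFrom_human {l : List (Act (LF F))}
    (hl : ExecFrom (compiled MR MH c) (encode .human r h ∅) l)
    (hgoal : (compiled MR MH c).goal ⊆ runSeq (encode .human r h ∅) l) :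
    ∃ ρR ρH, IsPlanFrom MR r ρR ∧ IsPlanFrom MH h ρH ∧
      ChecksAgainst MR l (runSeq r ρR ∆ runSeq h ρH) := by
  induction l generalizing h with
  | nil =>
    obtain ⟨hR, hH, hF⟩ := goal_compiled_subset_iff.1 hgoal
    exact ⟨[], [], ⟨trivial, hR⟩, ⟨trivial, hH⟩, checksAgainst_nil hF⟩
  | cons a l ih =>
    obtain ⟨ha, hx, hl⟩ := hl
    rcases mem_actions_compiled.1 ha with
      ⟨b, -, rfl⟩ | ⟨b, hb, rfl⟩ | rfl | rfl | ⟨g, -, rfl | rfl | rfl | rfl⟩ <;>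
      simp at hx
    · rw [runSeq, stepAct_liftH_encode] at hgoal
      rw [stepAct_liftH_encode] at hl
      obtain ⟨ρR, ρH, hρR, hρH, hchecks⟩ := ih hl hgoal
      exact ⟨ρR, b :: ρH, hρR, ⟨⟨hb, hx, hρH.1⟩, hρH.2⟩, hchecks.cons (by simp [liftH])⟩
    · rw [runSeq, stepAct_flipH_encode] at hgoal
      rw [stepAct_flipH_encode] at hl
      obtain ⟨ρR, hρR, hchecks⟩ := exists_plan_of_execFrom_robot hl hgoal
      exact ⟨ρR, [], hρR, ⟨trivial, hx⟩, hchecks.cons (by simp [flipH])⟩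

theorem exists_plans_of_isPlan_compiled {π : List (Act (LF F))}
    (hπ : IsPlan (compiled MR MH c) π) :
    ∃ ρR ρH, IsPlan MR ρR ∧ IsPlan MH ρH ∧ ChecksAgainst MR π (GSD MR MH ρR ρH) := by
  rw [IsPlan, init_compiled] at hπ
  exact exists_plans_of_execFrom_human hπ.1 hπ.2

lemma mul_agrCount_le_planCost (hcAgr : ∀ f ∈ MR.fluents, c (chk3 f) = P1 ∧ c (chk4 f) = P1)
    (l : List (Act (LF F))) : P1 * agrCount MR l ≤ planCost (compiled MR MH c) l := by
  induction l with
  | nil => simp [agrCount]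
  | cons a l ih =>
    have ha : P1 * agrCount MR [a] ≤ c a := by
      simp only [agrCount, List.countP_singleton, decide_eq_true_eq]
      split_ifs with ha
      · obtain ⟨f, hf, rfl | rfl⟩ := ha <;> simp [hcAgr f hf]
      · simp
    rw [agrCount_cons, mul_add]
    exact add_le_add ha ih

def checkFor (r h : Finset F) (f : F) : Act (LF F) :=
  if f ∈ r then (if f ∈ h then chk3 f else chk1 f) else (if f ∈ h then chk2 f else chk4 f)

lemma checkFor_mem_actions {f : F} (hf : f ∈ MR.fluents) :
    checkFor r h f ∈ (compiled MR MH c).actions := by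
  unfold checkFor
  split_ifs <;> exact mem_actions_compiled.2 (.inr <| .inr <| .inr <| .inr ⟨f, hf, by simp⟩)

lemma execAct_checkFor {f : F} : execAct (encode .check r h k) (checkFor r h f) ↔ f ∉ k := by
  unfold checkFor
  split_ifs <;> simp [*]

lemma stepAct_checkFor {f : F} :
    stepAct (encode p r h k) (checkFor r h f) = encode p r h (insert f k) := by
  unfold checkFor
  split_ifs <;> exact stepAct_encode_of_adds_compare rfl rfl

lemma execFrom_checkFor {L : List F} (hL : L.Nodup) (hLF : ∀ f ∈ L, f ∈ MR.fluents)
    (hLk : ∀ f ∈ L, f ∉ k) :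
    ExecFrom (compiled MR MH c) (encode .check r h k) (L.map (checkFor r h)) ∧
      runSeq (encode .check r h k) (L.map (checkFor r h)) =
        encode .check r h (k ∪ L.toFinset) := by
  induction L generalizing k with
  | nil => exact ⟨trivial, by simp [runSeq]⟩
  | cons f L ih =>
    rw [List.forall_mem_cons] at hLF hLk
    obtain ⟨hfL, hL⟩ := List.nodup_cons.1 hL
    obtain ⟨hexec, hrun⟩ := ih (k := insert f k) hL hLF.2
      fun g hg hgk => (Finset.mem_insert.1 hgk).elim (fun hgf => hfL (hgf ▸ hg)) (hLk.2 g hg)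
    refine ⟨⟨checkFor_mem_actions hLF.1, execAct_checkFor.2 hLk.1, ?_⟩, ?_⟩
    · rwa [stepAct_checkFor]
    · rw [List.map_cons, runSeq, stepAct_checkFor, hrun, List.toFinset_cons, Finset.insert_union,
        Finset.union_insert]

noncomputable def composedPlan (MR MH : PModel F) (σR σH : List (Act F)) : List (Act (LF F)) :=
  σH.map liftH ++ flipH MH :: (σR.map liftR ++ flipR MR ::
    MR.fluents.toList.map (checkFor (runSeq MR.init σR) (runSeq MH.init σH)))

theorem isPlan_composedPlan {σR σH : List (Act F)} (hσR : IsPlan MR σR) (hσH : IsPlan MH σH) :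
    IsPlan (compiled MR MH c) (composedPlan MR MH σR σH) := by
  obtain ⟨hexecR, hgoalR⟩ := hσR
  obtain ⟨hexecH, hgoalH⟩ := hσH
  have hH := ExecFrom.map (M' := compiled MR MH c) (L := liftH)
    (φ := fun h => encode .human MR.init h ∅)
    (fun b hb => mem_actions_compiled.2 (.inr (.inl ⟨b, hb, rfl⟩)))
    (fun _ _ hx => execAct_liftH_encode.2 ⟨rfl, hx⟩) (fun _ b => stepAct_liftH_encode b) hexecH
  have hR := ExecFrom.map (M' := compiled MR MH c) (L := liftR)
    (φ := fun r => encode .robot r (runSeq MH.init σH) ∅)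
    (fun b hb => mem_actions_compiled.2 (.inl ⟨b, hb, rfl⟩))
    (fun _ _ hx => execAct_liftR_encode.2 ⟨rfl, hx⟩) (fun _ b => stepAct_liftR_encode b) hexecR
  obtain ⟨hC, hrunC⟩ := execFrom_checkFor (MR := MR) (MH := MH) (c := c)
    (r := runSeq MR.init σR) (h := runSeq MH.init σH) (k := ∅) (Finset.nodup_toList _)
    (fun f hf => Finset.mem_toList.1 hf) (fun f _ => Finset.notMem_empty f)
  have hrunH := runSeq_map (φ := fun h => encode .human MR.init h ∅) (L := liftH)
    (fun _ b => stepAct_liftH_encode b) MH.init σH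
  have hrunR := runSeq_map (φ := fun r => encode .robot r (runSeq MH.init σH) ∅) (L := liftR)
    (fun _ b => stepAct_liftR_encode b) MR.init σR
  have hinit : (compiled MR MH c).init = encode .human MR.init MH.init ∅ := init_compiled
  refine ⟨?_, ?_⟩
  · rw [hinit, composedPlan, execFrom_append, hrunH]
    refine ⟨hH, mem_actions_compiled.2 (.inr (.inr (.inl rfl))),
      execAct_flipH_encode.2 ⟨rfl, hgoalH⟩, ?_⟩
    rw [stepAct_flipH_encode, execFrom_append, hrunR]
    refine ⟨hR, mem_actions_compiled.2 (.inr (.inr (.inr (.inl rfl)))),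
      execAct_flipR_encode.2 ⟨rfl, hgoalR⟩, ?_⟩
    rwa [stepAct_flipR_encode]
  · rw [hinit, composedPlan, runSeq_append, hrunH, runSeq, stepAct_flipH_encode, runSeq_append,
      hrunR, runSeq, stepAct_flipR_encode, hrunC, Finset.empty_union, Finset.toList_toFinset,
      goal_compiled_subset_iff]
    exact ⟨hgoalR, hgoalH, le_rfl⟩

lemma planCost_composedPlan (hcR : ∀ a ∈ MR.actions, c (liftR a) = 1)
    (hcH : ∀ a ∈ MH.actions, c (liftH a) = 1) (hcFlipH : c (flipH MH) = 0)
    (hcFlipR : c (flipR MR) = 0) (hcDis : ∀ f ∈ MR.fluents, c (chk1 f) = 0 ∧ c (chk2 f) = 0)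
    (hcAgr : ∀ f ∈ MR.fluents, c (chk3 f) = P1 ∧ c (chk4 f) = P1) {σR σH : List (Act F)}
    (hσR : IsPlan MR σR) (hσH : IsPlan MH σH) :
    planCost (compiled MR MH c) (composedPlan MR MH σR σH) =
      σH.length + σR.length + P1 * (MR.fluents \ GSD MR MH σR σH).card := by
  have hcheck : ∀ f ∈ MR.fluents, c (checkFor (runSeq MR.init σR) (runSeq MH.init σH) f) =
      if f ∈ GSD MR MH σR σH then 0 else P1 := by
    intro f hf
    rw [GSD_eq_symmDiff]
    unfold checkFor
    split_ifs <;> simp_all [Finset.mem_symmDiff]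
  simp only [planCost, compiled, composedPlan, List.map_append, List.map_cons, List.sum_append,
    List.sum_cons, List.map_map, hcFlipH, hcFlipR]
  rw [sum_map_eq_length (g := c ∘ liftH) fun b hb => hcH b (hσH.1.mem_actions b hb),
    sum_map_eq_length (g := c ∘ liftR) fun b hb => hcR b (hσR.1.mem_actions b hb),
    Finset.sum_map_toList, Finset.sum_congr (f := c ∘ checkFor _ _) rfl hcheck, Finset.sum_ite,
    Finset.sum_const_zero, Finset.sum_const, smul_eq_mul, Finset.filter_notMem_eq_sdiff]
  ring

end Compilation

lemma eq_of_mul_sub_le_add_mul_sub {P L n d G : ℕ} (hdG : d ≤ G) (hGn : G ≤ n) (hL : L < P)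
    (h : P * (n - d) ≤ L + P * (n - G)) : d = G := by
  by_contra hne
  have : P * (n - G + 1) ≤ P * (n - d) := Nat.mul_le_mul_left _ (by omega)
  rw [mul_add, mul_one] at this
  omega

open Compilation in
theorem prop3_gdup_via_compilation_general {F : Type} [DecidableEq F]
    (MR MH : PModel F) (c : Act (LF F) → ℕ) (P1 : ℕ)
    (hsh : MH.fluents = MR.fluents)
    (hwfR : WellFormed MR) (hwfH : WellFormed MH)
    (hcR : ∀ a ∈ MR.actions, c (liftR a) = 1)
    (hcH : ∀ a ∈ MH.actions, c (liftH a) = 1)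
    (hcFlipH : c (flipH MH) = 0) (hcFlipR : c (flipR MR) = 0)
    (hcDis : ∀ f ∈ MR.fluents, c (chk1 f) = 0 ∧ c (chk2 f) = 0)
    (hcAgr : ∀ f ∈ MR.fluents, c (chk3 f) = P1 ∧ c (chk4 f) = P1)
    (hP1 : P1 > 2 ^ (MR.fluents.card + MH.fluents.card))
    (π : List (Act (LF F))) (hπ : IsOptimal (compiled MR MH c) π) :
    disCount MR π = GDup MR MH := by
  obtain ⟨hπ, hopt⟩ := hπ
  have hGSD {σR σH} (hσR : IsPlan MR σR) (hσH : IsPlan MH σH) :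
      GSD MR MH σR σH ⊆ MR.fluents := by
    simpa [hsh] using GSD_subset_union hwfR hwfH hσR hσH
  obtain ⟨ρR, ρH, hρR, hρH, hchecks⟩ := exists_plans_of_isPlan_compiled hπ
  obtain ⟨σR, σH, hσR, hσH, hmax, hlenR, hlenH⟩ :=
    exists_short_plans_card_GSD_eq_GDup hwfR hwfH hρR hρH
  have hlower := (Nat.mul_le_mul_left P1 hchecks.card_sdiff_le_agrCount).trans
    (mul_agrCount_le_planCost (MH := MH) hcAgr π)
  have hupper := hopt _ (isPlan_composedPlan (c := c) hσR hσH)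
  rw [planCost_composedPlan hcR hcH hcFlipH hcFlipR hcDis hcAgr hσR hσH,
    Finset.card_sdiff_of_subset (hGSD hσR hσH), hmax] at hupper
  rw [Finset.card_sdiff_of_subset (hGSD hρR hρH)] at hlower
  rw [hchecks.disCount_eq (hGSD hρR hρH)]
  refine eq_of_mul_sub_le_add_mul_sub (card_GSD_le_GDup hwfR hwfH hρR hρH)
    (hmax ▸ Finset.card_le_card (hGSD hσR hσH)) ?_ (hlower.trans hupper)
  have := add_lt_two_pow_add hlenR hlenH
  omega

/-- Proposition 3: in the compiled model `M^λ`, give all robot and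
human-copy actions unit cost, the flip actions zero cost, each check disagreement action
cost `P2 = 0`, and each check agreement action cost `P1 > 2^{|F^R|+|F^H|}`. Then any
cost-optimal plan `π^λ` of `M^λ` satisfies `|κ⁻(π^λ)| = GD↑(M^R, M^H)`. -/
theorem prop3_gdup_via_compilation {F : Type} [DecidableEq F] [Fintype F]
    (MR MH : PModel F) (c : Act (LF F) → ℕ) (P1 : ℕ)
    (hsh : MH.fluents = MR.fluents)
    (hwfR : WellFormed MR) (hwfH : WellFormed MH)
    (hcR : ∀ a ∈ MR.actions, c (liftR a) = 1)
    (hcH : ∀ a ∈ MH.actions, c (liftH a) = 1)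
    (hcFlipH : c (flipH MH) = 0) (hcFlipR : c (flipR MR) = 0)
    (hcDis : ∀ f ∈ MR.fluents, c (chk1 f) = 0 ∧ c (chk2 f) = 0)
    (hcAgr : ∀ f ∈ MR.fluents, c (chk3 f) = P1 ∧ c (chk4 f) = P1)
    (hP1 : P1 > 2 ^ (MR.fluents.card + MH.fluents.card))
    (π : List (Act (LF F))) (hπ : IsOptimal (compiled MR MH c) π) :
    disCount MR π = GDup MR MH :=
  prop3_gdup_via_compilation_general MR MH c P1 hsh hwfR hwfH hcR hcH hcFlipH hcFlipR hcDis hcAgr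
    hP1 π hπ
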